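/- The simple graph obtained from Γ₇ by deleting the edges va₂ and vb₂ and then contracting the edge va₁ (identifying v with a₁ and deleting any resulting loops and parallel edges) is isomorphic to the complete bipartite graph K₃,₃; in particular, K₃,₃ is a minor of Γ₇. -/

import Mathlib

/-- `H` is a minor of `G`: `H` can be obtained from a subgraph of `G` by contracting edges.
Equivalently (branch-set formulation): there is a family of nonempty, pairwise disjoint,
connected subsets of the vertices of `G`, indexed by the vertices of `H`, such that whenever
two vertices are adjacent in `H` there is an edge of `G` between the corresponding sets. -/
def IsMinor {W V : Type} (H : SimpleGraph W) (G : SimpleGraph V) : Prop :=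
  ∃ B : W → Set V,
    (∀ w, (B w).Nonempty) ∧
    (∀ w, (G.induce (B w)).Connected) ∧
    (∀ w₁ w₂, w₁ ≠ w₂ → Disjoint (B w₁) (B w₂)) ∧
    (∀ w₁ w₂, H.Adj w₁ w₂ → ∃ u ∈ B w₁, ∃ x ∈ B w₂, G.Adj u x)

/-- The complete bipartite graph `K₃,₃`. -/
def K33 : SimpleGraph (Fin 3 ⊕ Fin 3) := completeBipartiteGraph (Fin 3) (Fin 3)

/-- The vertices of the graph `Γ₇`. -/
inductive V7 : Type
  | v | a1 | a2 | a3 | b1 | b2 | b3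
  deriving DecidableEq

open V7

/-- The graph `Γ₇`: the hexagonal cycle `a₁a₂a₃b₁b₂b₃a₁`, the chords `a₂b₂` and `a₃b₃`,
and the four edges `va₁`, `vb₁`, `va₂`, `vb₂`. -/
def Gamma7 : SimpleGraph V7 :=
  SimpleGraph.fromEdgeSet
    {s(a1, a2), s(a2, a3), s(a3, b1), s(b1, b2), s(b2, b3), s(b3, a1),
     s(a2, b2), s(a3, b3),
     s(v, a1), s(v, b1), s(v, a2), s(v, b2)}

/-- The vertices of the graph obtained from `Γ₇` by contracting the edge `va₁`
(the vertex `v` is identified with `a₁`). -/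
inductive V6 : Type
  | A1 | A2 | A3 | B1 | B2 | B3
  deriving DecidableEq

/-- The map identifying `v` with `a₁`. -/
def q7 : V7 → V6
  | v => V6.A1
  | a1 => V6.A1
  | a2 => V6.A2
  | a3 => V6.A3
  | b1 => V6.B1
  | b2 => V6.B2
  | b3 => V6.B3

/-- `Γ₇` with the edges `va₂` and `vb₂` deleted. -/
def Gamma7del : SimpleGraph V7 := Gamma7.deleteEdges {s(v, a2), s(v, b2)}

/-- The graph obtained from `Γ₇` by deleting the edges `va₂` and `vb₂` and then contracting
the edge `va₁`: the vertex `v` is identified with `a₁`, and any resulting loops and parallel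
edges are deleted. -/
def Gamma7contr : SimpleGraph V6 :=
  SimpleGraph.fromRel (fun x y => ∃ u u' : V7, q7 u = x ∧ q7 u' = y ∧ Gamma7del.Adj u u')


/-!
After deleting `va₂`, `vb₂` and contracting `va₁`, the six vertices split into the sides
`{a₁, a₃, b₂}` and `{a₂, b₁, b₃}`: all nine edges between them are present and none inside a
side. Contracting along a map whose fibres are connected is a minor operation (the fibres are
the branch sets), and minors are inherited by supergraphs, so `K₃,₃` is a minor of `Γ₇`.
-/

open SimpleGraph Function

variable {U V W : Type}

def SimpleGraph.contract (G : SimpleGraph V) (q : V → W) : SimpleGraph W :=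
  fromRel fun x y => ∃ u u' : V, q u = x ∧ q u' = y ∧ G.Adj u u'

lemma SimpleGraph.IsClique.induce_connected {G : SimpleGraph V} {s : Set V} (hs : G.IsClique s)
    (hne : s.Nonempty) : (G.induce s).Connected := by
  have : Nonempty s := hne.to_subtype
  rw [induce_eq_top.mpr hs]
  exact connected_top

lemma IsMinor.mono {H : SimpleGraph W} {G G' : SimpleGraph V} (hH : IsMinor H G) (hle : G ≤ G') :
    IsMinor H G' := by
  obtain ⟨B, hne, hconn, hdisj, hadj⟩ := hH
  refine ⟨B, hne, fun w => (hconn w).mono (comap_monotone _ hle), hdisj, fun w₁ w₂ h => ?_⟩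
  obtain ⟨u, hu, x, hx, hux⟩ := hadj w₁ w₂ h
  exact ⟨u, hu, x, hx, hle hux⟩

lemma IsMinor.of_iso {H : SimpleGraph W} {H' : SimpleGraph U} {G : SimpleGraph V}
    (hH : IsMinor H G) (e : H ≃g H') : IsMinor H' G := by
  obtain ⟨B, hne, hconn, hdisj, hadj⟩ := hH
  refine ⟨B ∘ e.symm, fun w => hne _, fun w => hconn _, fun w₁ w₂ h => ?_, fun w₁ w₂ h => ?_⟩
  · exact hdisj _ _ (e.symm.injective.ne h)
  · exact hadj _ _ (e.symm.map_adj_iff.mpr h)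

lemma isMinor_contract (G : SimpleGraph V) {q : V → W} (hq : Surjective q)
    (hconn : ∀ w, (G.induce (q ⁻¹' {w})).Connected) : IsMinor (G.contract q) G := by
  refine ⟨fun w => q ⁻¹' {w}, fun w => hq w, hconn, fun w₁ w₂ h => ?_, fun w₁ w₂ h => ?_⟩
  · exact Set.disjoint_iff.mpr fun u ⟨h₁, h₂⟩ => h (h₁.symm.trans h₂)
  · obtain ⟨-, ⟨u, u', rfl, rfl, huu'⟩ | ⟨u, u', rfl, rfl, huu'⟩⟩ := h
    · exact ⟨u, rfl, u', rfl, huu'⟩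
    · exact ⟨u', rfl, u, rfl, huu'.symm⟩

open V7

instance : Fintype V7 := Fintype.ofList [v, a1, a2, a3, b1, b2, b3] (by intro x; cases x <;> decide)

instance : Fintype V6 :=
  Fintype.ofList [.A1, .A2, .A3, .B1, .B2, .B3] (by intro x; cases x <;> decide)

instance : DecidableRel Gamma7.Adj := by unfold Gamma7; infer_instance

instance : DecidableRel Gamma7del.Adj := by unfold Gamma7del; infer_instance

instance : DecidableRel Gamma7contr.Adj := by unfold Gamma7contr; infer_instance

instance : DecidableRel K33.Adj := by unfold K33 completeBipartiteGraph; infer_instance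

lemma q7_surjective : Surjective q7 := by decide

lemma isClique_fiber_q7 (w : V6) : Gamma7del.IsClique (q7 ⁻¹' {w}) := by
  intro x hx y hy
  simp only [Set.mem_preimage, Set.mem_singleton_iff] at hx hy
  subst hy
  revert x y
  decide

def gamma7contrIsoK33 : Gamma7contr ≃g K33 where
  toFun
    | .A1 => .inl 0 | .A3 => .inl 1 | .B2 => .inl 2
    | .A2 => .inr 0 | .B1 => .inr 1 | .B3 => .inr 2
  invFun
    | .inl 0 => .A1 | .inl 1 => .A3 | .inl 2 => .B2
    | .inr 0 => .A2 | .inr 1 => .B1 | .inr 2 => .B3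
  left_inv := by decide
  right_inv := by decide
  map_rel_iff' := by decide

/-- The graph obtained from `Γ₇` by deleting the edges `va₂` and `vb₂` and then contracting
the edge `va₁` is isomorphic to the complete bipartite graph `K₃,₃`; in particular, `K₃,₃`
is a minor of `Γ₇`. -/
theorem Gamma7_has_K33_minor :
    Nonempty (Gamma7contr ≃g K33) ∧ IsMinor K33 Gamma7 := by
  have hcontr : IsMinor Gamma7contr Gamma7del :=
    isMinor_contract Gamma7del q7_surjective fun w =>
      (isClique_fiber_q7 w).induce_connected (q7_surjective w)
  exact ⟨⟨gamma7contrIsoK33⟩,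
    (hcontr.mono (Gamma7.deleteEdges_le _)).of_iso gamma7contrIsoK33⟩
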